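/- Let ι be a nonempty finite type, β a type, and K = ℓ²(ι × β, ℂ). Let ρ and ρ' be states on K. Then ρ|₀ = ρ'|₀ if and only if for every bounded linear operator B on K localized in the first factor, Tr(Bρ) = Tr(Bρ'). -/

import Mathlib

open scoped ComplexConjugate
open Classical

noncomputable section

variable {ι β : Type}

/-- The Hilbert space `ℓ²(ι × β, ℂ)`. -/
abbrev K (ι β : Type) : Type := lp (fun _ : ι × β => ℂ) 2

/-- Canonical basis vector. -/
def e (u : ι) (v : β) : K ι β := lp.single 2 (u, v) 1

/-- `B` is localized in the first factor. -/
def LocalizedFst (B : K ι β →L[ℂ] K ι β) : Prop :=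
  ∃ b : ι → ι → ℂ, ∀ (u u' : ι) (v v' : β),
    (inner ℂ (e u v) (B (e u' v')) : ℂ) = if v = v' then b u u' else 0

/-- A state: countable convex combination of an orthonormal family of pure states. -/
structure State (H : Type) [NormedAddCommGroup H] [InnerProductSpace ℂ H] where
  ψ : ℕ → H
  p : ℕ → ℝ
  nonneg : ∀ k, 0 ≤ p k
  sum_one : HasSum p 1
  ortho : ∀ j k, p j ≠ 0 → p k ≠ 0 → (inner ℂ (ψ j) (ψ k) : ℂ) = if j = k then 1 else 0

/-- Reduction of a state to the first factor. -/
def red0 (ρ : State (K ι β)) : ι → ι → ℂ := fun u u' =>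
  ∑' k, (ρ.p k : ℂ) * ∑' v : β, (ρ.ψ k) (u, v) * conj ((ρ.ψ k) (u', v))

/-- `Tr(Bρ)`. -/
def trB (B : K ι β →L[ℂ] K ι β) (ρ : State (K ι β)) : ℂ :=
  ∑' k, (ρ.p k : ℂ) * (inner ℂ (ρ.ψ k) (B (ρ.ψ k)) : ℂ)

/-!
Write `F_u ψ = ψ(u, ·)` for the restriction of `ψ` to the fiber over `u` and `E_{u u'} = F_u† F_{u'}`
for the matrix units acting on the first factor. A localized operator with coefficients `b` is
`∑ b u u' • E_{u u'}`, and `⟪ψ, E_{u u'} ψ⟫ = ⟪F_u ψ, F_{u'} ψ⟫`, so `Tr(E_{u u'} ρ)` is the conjugate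
of `ρ|₀(u, u')`. Since `B ↦ Tr(Bρ)` is linear (the series converge absolutely because `‖ψ_k‖ = 1`
whenever `p_k ≠ 0`), the traces against localized operators and the reduction determine each other.
-/

open scoped InnerProductSpace

namespace lp

variable {𝕜 E γ δ : Type*} [NontriviallyNormedField 𝕜] [NormedAddCommGroup E] [NormedSpace 𝕜 E]
  {p : ENNReal} [Fact (1 ≤ p)]

def compInjective (hp : 0 < p.toReal) {σ : γ → δ} (hσ : σ.Injective) :
    lp (fun _ : δ => E) p →L[𝕜] lp (fun _ : γ => E) p :=
  LinearMap.mkContinuous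
    { toFun f := ⟨f ∘ σ, memℓp_gen (((lp.memℓp f).summable hp).comp_injective hσ)⟩
      map_add' _ _ := rfl
      map_smul' _ _ := rfl }
    1 fun f => by
      rw [one_mul]
      refine norm_le_of_tsum_le hp (norm_nonneg f) ?_
      rw [norm_rpow_eq_tsum hp]
      exact tsum_comp_le_tsum_of_inj ((lp.memℓp f).summable hp) (fun _ => by positivity) hσ

@[simp]
lemma compInjective_apply (hp : 0 < p.toReal) {σ : γ → δ} (hσ : σ.Injective)
    (f : lp (fun _ : δ => E) p) (i : γ) : compInjective (𝕜 := 𝕜) hp hσ f i = f (σ i) :=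
  rfl

end lp

lemma inner_e (u : ι) (v : β) (x : K ι β) : ⟪e u v, x⟫_ℂ = x (u, v) := by
  simp [e, lp.inner_single_left]

lemma e_apply (u : ι) (v : β) (p : ι × β) : e u v p = if p = (u, v) then 1 else 0 := by
  simp [e, lp.single_apply, Pi.single_apply]

lemma ext_inner_e {B B' : K ι β →L[ℂ] K ι β}
    (h : ∀ u v u' v', ⟪e u v, B (e u' v')⟫_ℂ = ⟪e u v, B' (e u' v')⟫_ℂ) : B = B' := by
  refine lp.ext_continuousLinearMap (ENNReal.ofNat_ne_top (n := 2)) fun p => ?_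
  refine ContinuousLinearMap.ext_ring (lp.ext (funext fun q => ?_))
  have h := h q.1 q.2 p.1 p.2
  rw [inner_e, inner_e] at h
  simpa [e] using h

def fiberCLM (u : ι) : K ι β →L[ℂ] lp (fun _ : β => ℂ) 2 :=
  lp.compInjective (by norm_num) (Prod.mk_right_injective u)

def matrixUnitOp (u u' : ι) : K ι β →L[ℂ] K ι β :=
  ContinuousLinearMap.adjoint (fiberCLM u) ∘L fiberCLM u'

lemma inner_matrixUnitOp (u u' : ι) (φ ψ : K ι β) :
    ⟪φ, matrixUnitOp u u' ψ⟫_ℂ = ∑' v, ψ (u', v) * conj (φ (u, v)) := by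
  simp [matrixUnitOp, ContinuousLinearMap.adjoint_inner_right, lp.inner_eq_tsum, fiberCLM]

lemma matrixUnitOp_apply (u u' x : ι) (v : β) (ψ : K ι β) :
    matrixUnitOp u u' ψ (x, v) = if x = u then ψ (u', v) else 0 := by
  rw [← inner_e, inner_matrixUnitOp]
  split_ifs with hx
  · simp [e_apply, hx]
  · simp [e_apply, Ne.symm hx]

lemma inner_e_matrixUnitOp_e (u u' x x' : ι) (v v' : β) :
    ⟪e x v, matrixUnitOp u u' (e x' v')⟫_ℂ = if v = v' then Matrix.single u u' 1 x x' else 0 := by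
  rw [inner_e, matrixUnitOp_apply, e_apply, Matrix.single_apply]
  grind

lemma localizedFst_matrixUnitOp (u u' : ι) : LocalizedFst (β := β) (matrixUnitOp u u') :=
  ⟨Matrix.single u u' 1, inner_e_matrixUnitOp_e u u'⟩

lemma eq_sum_smul_matrixUnitOp [Fintype ι] {B : K ι β →L[ℂ] K ι β} {b : ι → ι → ℂ}
    (hb : ∀ u u' v v', ⟪e u v, B (e u' v')⟫_ℂ = if v = v' then b u u' else 0) :
    B = ∑ u, ∑ u', b u u' • matrixUnitOp u u' := by
  refine ext_inner_e fun x v x' v' => ?_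
  simp only [hb, sum_apply, smul_apply, inner_sum, inner_smul_right, inner_e_matrixUnitOp_e]
  split_ifs <;> simp [Matrix.single_apply, ite_and]

namespace State

variable {H : Type} [NormedAddCommGroup H] [InnerProductSpace ℂ H]

lemma norm_ψ_eq_one (ρ : State H) {k : ℕ} (hk : ρ.p k ≠ 0) : ‖ρ.ψ k‖ = 1 := by
  have h := ρ.ortho k k hk hk
  rw [if_pos rfl] at h
  rw [norm_eq_sqrt_re_inner (𝕜 := ℂ), h]
  simp

lemma summable_p_mul_inner (ρ : State H) (B : H →L[ℂ] H) :
    Summable fun k => (ρ.p k : ℂ) * ⟪ρ.ψ k, B (ρ.ψ k)⟫_ℂ := by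
  refine Summable.of_norm_bounded (ρ.sum_one.summable.mul_right ‖B‖) fun k => ?_
  by_cases hk : ρ.p k = 0
  · simp [hk]
  calc ‖(ρ.p k : ℂ) * ⟪ρ.ψ k, B (ρ.ψ k)⟫_ℂ‖ ≤ ρ.p k * (‖ρ.ψ k‖ * (‖B‖ * ‖ρ.ψ k‖)) := by
        rw [norm_mul, Complex.norm_real, Real.norm_of_nonneg (ρ.nonneg k)]
        gcongr
        · exact ρ.nonneg k
        exact (norm_inner_le_norm _ _).trans (by gcongr; exact B.le_opNorm _)
    _ = ρ.p k * ‖B‖ := by rw [ρ.norm_ψ_eq_one hk]; ring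

end State

def trBₗ (ρ : State (K ι β)) : (K ι β →L[ℂ] K ι β) →ₗ[ℂ] ℂ where
  toFun B := trB B ρ
  map_add' B B' := by
    simp only [trB, add_apply, inner_add_right, mul_add]
    exact (ρ.summable_p_mul_inner B).tsum_add (ρ.summable_p_mul_inner B')
  map_smul' c B := by
    simp only [trB, smul_apply, inner_smul_right, RingHom.id_apply, smul_eq_mul,
      ← tsum_mul_left]
    exact tsum_congr fun k => by ring

@[simp]
lemma trBₗ_apply (ρ : State (K ι β)) (B : K ι β →L[ℂ] K ι β) : trBₗ ρ B = trB B ρ :=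
  rfl

lemma trB_matrixUnitOp (ρ : State (K ι β)) (u u' : ι) :
    trB (matrixUnitOp u u') ρ = conj (red0 ρ u u') := by
  simp only [trB, red0, inner_matrixUnitOp, Complex.conj_tsum, map_mul, Complex.conj_ofReal,
    Complex.conj_conj]
  exact tsum_congr fun k => congrArg _ (tsum_congr fun v => mul_comm _ _)

theorem red0_eq_iff_trace_eq_on_localized_general
    {ι β : Type} [Fintype ι] (ρ ρ' : State (K ι β)) :
    red0 ρ = red0 ρ' ↔
      ∀ B : K ι β →L[ℂ] K ι β, LocalizedFst B → trB B ρ = trB B ρ' := by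
  constructor
  · rintro h B ⟨b, hb⟩
    rw [← trBₗ_apply, ← trBₗ_apply, eq_sum_smul_matrixUnitOp hb]
    simp only [map_sum, map_smul, trBₗ_apply, trB_matrixUnitOp, h]
  · intro h
    ext u u'
    have h := h _ (localizedFst_matrixUnitOp u u')
    rw [trB_matrixUnitOp, trB_matrixUnitOp] at h
    exact (starRingEnd ℂ).injective h

/-- two states have equal reductions to the first factor iff every bounded
operator localized in the first factor has the same trace against them. -/
theorem red0_eq_iff_trace_eq_on_localized
    {ι β : Type} [Fintype ι] [Nonempty ι] (ρ ρ' : State (K ι β)) :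
    red0 ρ = red0 ρ' ↔
      ∀ B : K ι β →L[ℂ] K ι β, LocalizedFst B → trB B ρ = trB B ρ' :=
  red0_eq_iff_trace_eq_on_localized_general ρ ρ'

end
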